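/- arXiv:2308.02641 — 2 statements merged into one kernel-verified Lean document; each statement's English description precedes it below -/
import Mathlib

section
/- The function $t \mapsto \frac{e^t}{e^t - 1} - \frac{1}{t} - \frac{1}{2}$ is positive for all $t > 0$. -/
lemma sinh_lt_mul_cosh (x : ℝ) (hx : 0 < x) : Real.sinh x < x * Real.cosh x := by
  have h : StrictMonoOn (fun y : ℝ => y * Real.cosh y - Real.sinh y) (Set.Ici 0) := by
    apply strictMonoOn_of_deriv_pos (convex_Ici 0)
    · fun_prop
    · intro y hy
      rw [interior_Ici, Set.mem_Ioi] at hy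
      have hd : HasDerivAt (fun y : ℝ => y * Real.cosh y - Real.sinh y)
          (1 * Real.cosh y + y * Real.sinh y - Real.cosh y) y :=
        ((hasDerivAt_id y).mul (Real.hasDerivAt_cosh y)).sub (Real.hasDerivAt_sinh y)
      rw [hd.deriv]
      have := Real.sinh_pos_iff.2 hy
      nlinarith
  have := h (Set.self_mem_Ici) (Set.mem_Ici.2 hx.le) hx
  simp at this
  linarith

theorem stmt_11 (t : ℝ) (ht : 0 < t) :
    0 < Real.exp t / (Real.exp t - 1) - 1 / t - 1 / 2 := by
  have hx : 0 < t / 2 := by linarith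
  have key := sinh_lt_mul_cosh (t / 2) hx
  rw [Real.sinh_eq, Real.cosh_eq] at key
  have he : Real.exp (t / 2) * Real.exp (t / 2) = Real.exp t := by
    rw [← Real.exp_add]; ring_nf
  have hei : Real.exp (t / 2) * Real.exp (-(t / 2)) = 1 := by
    rw [← Real.exp_add]; simp
  have hp : 0 < Real.exp (t / 2) := Real.exp_pos _
  have hE : 1 < Real.exp t := by simpa using Real.exp_lt_exp.2 ht
  -- from key, multiply by exp(t/2):
  have key2 : 2 * (Real.exp t - 1) < t * (Real.exp t + 1) := by
    nlinarith [mul_lt_mul_of_pos_left key hp]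
  have hE1 : 0 < Real.exp t - 1 := by linarith
  rw [sub_sub, lt_sub_iff_add_lt, zero_add, div_add_div _ _ (ne_of_gt ht) (by norm_num : (2:ℝ) ≠ 0), div_lt_div_iff₀ (by positivity) hE1]
  nlinarith
end

section
/- For all $\mu > 0$, the trigamma function satisfies $\psi^{(1)}(\mu) < \frac{1}{\mu} + \frac{1}{2\mu^2} + \frac{1}{6\mu^3}$. -/
/-!
By the functional equation `ψ(x + 1) = ψ(x) + 1/x` and the squeeze `log (x - 1) ≤ ψ(x) ≤ log x`
coming from the convexity of `log ∘ Γ`, the digamma function is the limit of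
`log N - ∑_{k < N} 1/(x + k)`; differentiating termwise gives `ψ⁽¹⁾(x) = ∑ₙ 1/(x + n)²`.
The bound `B(x) = 1/x + 1/(2x²) + 1/(6x³)` tends to `0` and satisfies
`B(x) - B(x + 1) = 1/x² + 1/(6x³(x + 1)³) > 1/x²`, so telescoping gives
`∑ₙ 1/(x + n)² < B(x)`.
-/

/-- The digamma function `ψ = Γ'/Γ`. -/
noncomputable def digamma (x : ℝ) : ℝ := deriv Real.Gamma x / Real.Gamma x

/-- The trigamma function `ψ⁽¹⁾ = ψ'`. -/
noncomputable def trigamma (x : ℝ) : ℝ := deriv digamma x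

open Real Filter Topology Finset

variable {x : ℝ}

section Digamma

lemma hasDerivAt_log_Gamma (hx : 0 < x) : HasDerivAt (log ∘ Gamma) (digamma x) x :=
  (differentiableAt_Gamma fun m => ne_of_gt (by linarith [(Nat.cast_nonneg m : (0 : ℝ) ≤ m)]))
    |>.hasDerivAt.log (Gamma_pos_of_pos hx).ne'

lemma log_Gamma_add_one (hx : 0 < x) :
    (log ∘ Gamma) (x + 1) = log x + (log ∘ Gamma) x := by
  simp only [Function.comp_apply, Gamma_add_one hx.ne', log_mul hx.ne' (Gamma_pos_of_pos hx).ne']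

lemma digamma_add_one (hx : 0 < x) : digamma (x + 1) = digamma x + x⁻¹ := by
  have hshift : HasDerivAt (fun y => (log ∘ Gamma) (y + 1)) (digamma (x + 1)) x :=
    (hasDerivAt_log_Gamma (by linarith)).comp_add_const x 1
  have hsum : HasDerivAt (fun y => log y + (log ∘ Gamma) y) (x⁻¹ + digamma x) x :=
    (hasDerivAt_log hx.ne').add (hasDerivAt_log_Gamma hx)
  have heq : (fun y => (log ∘ Gamma) (y + 1)) =ᶠ[𝓝 x] fun y => log y + (log ∘ Gamma) y := by
    filter_upwards [eventually_gt_nhds hx] with y hy using log_Gamma_add_one hy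
  rw [(hshift.congr_of_eventuallyEq heq.symm).unique hsum, add_comm]

lemma digamma_add_nat (hx : 0 < x) (N : ℕ) :
    digamma (x + N) = digamma x + ∑ k ∈ range N, (x + k)⁻¹ := by
  induction N with
  | zero => simp
  | succ n ih =>
    rw [Nat.cast_succ, ← add_assoc, digamma_add_one (by positivity), ih, sum_range_succ, add_assoc]

lemma slope_log_Gamma (hx : 0 < x) : slope (log ∘ Gamma) x (x + 1) = log x := by
  rw [slope_def_field, log_Gamma_add_one hx]
  ring

lemma digamma_le_log (hx : 0 < x) : digamma x ≤ log x := by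
  have h := convexOn_log_Gamma.deriv_le_slope hx (by simp; linarith) (lt_add_one x)
    (hasDerivAt_log_Gamma hx).differentiableAt
  rwa [(hasDerivAt_log_Gamma hx).deriv, slope_log_Gamma hx] at h

lemma log_le_digamma_add_one (hx : 0 < x) : log x ≤ digamma (x + 1) := by
  have hx1 : 0 < x + 1 := by linarith
  have h := convexOn_log_Gamma.slope_le_deriv hx hx1 (lt_add_one x)
    (hasDerivAt_log_Gamma hx1).differentiableAt
  rwa [(hasDerivAt_log_Gamma hx1).deriv, slope_log_Gamma hx] at h

lemma tendsto_digamma_add_nat_sub_log (hx : 0 < x) :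
    Tendsto (fun N : ℕ => digamma (x + N) - log N) atTop (𝓝 0) := by
  have hlog (c : ℝ) : Tendsto (fun N : ℕ => log (N + c) - log N) atTop (𝓝 0) :=
    (tendsto_log_comp_add_sub_log c).comp tendsto_natCast_atTop_atTop
  refine tendsto_of_tendsto_of_tendsto_of_le_of_le' (hlog (x - 1)) (hlog x) ?_ ?_
  · filter_upwards [eventually_ge_atTop 1] with N hN
    have hN : (1 : ℝ) ≤ N := by exact_mod_cast hN
    have h := log_le_digamma_add_one (x := N + (x - 1)) (by linarith)
    rw [show (N : ℝ) + (x - 1) + 1 = x + N by ring] at h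
    exact sub_le_sub_right h _
  · filter_upwards with N
    rw [add_comm (N : ℝ)]
    exact sub_le_sub_right (digamma_le_log (by positivity)) _

noncomputable def digammaApprox (N : ℕ) (x : ℝ) : ℝ := log N - ∑ k ∈ range N, (x + k)⁻¹

lemma tendsto_digammaApprox (hx : 0 < x) :
    Tendsto (digammaApprox · x) atTop (𝓝 (digamma x)) := by
  have h := (tendsto_const_nhds (x := digamma x)).sub (tendsto_digamma_add_nat_sub_log hx)
  rw [sub_zero] at h
  refine h.congr fun N => ?_
  rw [digammaApprox, digamma_add_nat hx]
  ring

lemma hasDerivAt_digammaApprox (N : ℕ) (hx : 0 < x) :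
    HasDerivAt (digammaApprox N) (∑ k ∈ range N, ((x + k) ^ 2)⁻¹) x := by
  have h : HasDerivAt (fun y : ℝ => ∑ k ∈ range N, (y + k)⁻¹)
      (∑ k ∈ range N, -((x + k) ^ 2)⁻¹) x :=
    HasDerivAt.fun_sum fun k _ => (hasDerivAt_inv (by positivity)).comp_add_const x (k : ℝ)
  have h' := h.const_sub (log N)
  rwa [sum_neg_distrib, neg_neg] at h'

lemma summable_inv_add_nat_sq (c : ℝ) : Summable fun n : ℕ => ((c + n) ^ 2)⁻¹ := by
  have h := (summable_one_div_nat_add_rpow c 2).mpr one_lt_two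
  simpa [rpow_two, sq_abs, add_comm] using h

lemma hasDerivAt_digamma (hx : 0 < x) :
    HasDerivAt digamma (∑' n : ℕ, ((x + n) ^ 2)⁻¹) x := by
  have hbound (n : ℕ) (y : ℝ) (hy : y ∈ Set.Ioi (x / 2)) :
      ‖((y + n) ^ 2)⁻¹‖ ≤ ((x / 2 + n) ^ 2)⁻¹ := by
    rw [Set.mem_Ioi] at hy
    rw [norm_inv, norm_pow, Real.norm_eq_abs, sq_abs]
    gcongr
  refine hasDerivAt_of_tendstoUniformlyOn isOpen_Ioi
    (tendstoUniformlyOn_tsum_nat (summable_inv_add_nat_sq (x / 2)) hbound)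
    (Eventually.of_forall fun N y hy => hasDerivAt_digammaApprox N (by simp at hy; linarith))
    (fun y hy => tendsto_digammaApprox (by simp at hy; linarith)) (by simp; linarith)

lemma trigamma_eq_tsum (hx : 0 < x) : trigamma x = ∑' n : ℕ, ((x + n) ^ 2)⁻¹ :=
  (hasDerivAt_digamma hx).deriv

end Digamma

section Bound

noncomputable def trigammaBound (x : ℝ) : ℝ := 1 / x + 1 / (2 * x ^ 2) + 1 / (6 * x ^ 3)

lemma inv_sq_lt_trigammaBound_sub (hx : 0 < x) :
    (x ^ 2)⁻¹ < trigammaBound x - trigammaBound (x + 1) := by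
  have h : trigammaBound x - trigammaBound (x + 1) = (x ^ 2)⁻¹ + (6 * x ^ 3 * (x + 1) ^ 3)⁻¹ := by
    unfold trigammaBound
    field_simp
    ring
  rw [h, lt_add_iff_pos_right]
  positivity

lemma tendsto_trigammaBound_atTop : Tendsto trigammaBound atTop (𝓝 0) := by
  have h1 : Tendsto (fun x : ℝ => x⁻¹) atTop (𝓝 0) := tendsto_inv_atTop_zero
  have h := (h1.add ((h1.pow 2).const_mul 2⁻¹)).add ((h1.pow 3).const_mul 6⁻¹)
  norm_num at h
  refine h.congr fun x => ?_
  simp only [trigammaBound, one_div, mul_inv]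

lemma hasSum_trigammaBound_sub (hx : 0 < x) :
    HasSum (fun n : ℕ => trigammaBound (x + n) - trigammaBound (x + n + 1)) (trigammaBound x) := by
  have hpos (n : ℕ) : 0 ≤ trigammaBound (x + n) - trigammaBound (x + n + 1) :=
    (lt_trans (by positivity) (inv_sq_lt_trigammaBound_sub (by positivity))).le
  have hpartial (N : ℕ) : ∑ n ∈ range N, (trigammaBound (x + n) - trigammaBound (x + n + 1)) =
      trigammaBound x - trigammaBound (x + N) := by
    simpa [add_assoc] using sum_range_sub' (fun n : ℕ => trigammaBound (x + n)) N
  rw [hasSum_iff_tendsto_nat_of_nonneg hpos]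
  simp only [hpartial]
  simpa using tendsto_const_nhds.sub (tendsto_trigammaBound_atTop.comp
    (tendsto_atTop_add_const_left _ x tendsto_natCast_atTop_atTop))

end Bound

theorem stmt_12 (μ : ℝ) (hμ : 0 < μ) :
    trigamma μ < 1 / μ + 1 / (2 * μ ^ 2) + 1 / (6 * μ ^ 3) := by
  rw [trigamma_eq_tsum hμ]
  have hlt (n : ℕ) := inv_sq_lt_trigammaBound_sub (x := μ + n) (by positivity)
  exact hasSum_lt (fun n => (hlt n).le) (hlt 0) (summable_inv_add_nat_sq μ).hasSum
    (hasSum_trigammaBound_sub hμ)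
end
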